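/- Let a, b ∈ (0, 1/2) with b > a/(1+a), and let ε > 0 be small enough that (1/2)log((1+a)+ε) + (1/2)log((1−b)+ε) < 0. Then for Lebesgue-almost every x ∈ [0,1] with respect to the doubling map f(x) = 2x mod 1, there exists δ(x) > 0 such that for all y₀ ∈ (0, δ(x)), the fiber orbit y_n = g^n_{a,b,x}(y₀) converges to 0. -/

import Mathlib

open MeasureTheory Filter

/-- The doubling map f(x) = 2x mod 1. -/
noncomputable def doubling (x : ℝ) : ℝ := Int.fract (2 * x)

/-- The fiber map of the skew product F_{a,b}. -/
noncomputable def fiberMap (a b x y : ℝ) : ℝ :=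
  if x < 1/2 then y + a * y * (1 - y) else y - b * y * (1 - y)

/-!
Near `y = 0` the fiber map is at most `λ(x) y`, where `λ = λ₀ = 1 + a + ε` on `[0, 1/2)` and
`λ = λ₁ = 1 - b + ε` on `[1/2, 1)`. So while the orbit stays small, `y_n ≤ y₀ ∏_{k<n} λ(f^k x)`,
and it suffices that these products tend to `0` for almost every `x`; then they are bounded, and
a small enough `y₀` never leaves the region where the estimate holds.
Each half of `[0, 1)` is mapped by the doubling map affinely onto `[0, 1)` with Jacobian `2`, so
`∫₀¹ (∏_{k<n} λ(f^k x))^s dx = ((λ₀^s + λ₁^s) / 2)^n`. As `log λ₀ + log λ₁ < 0`, the mean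
`(λ₀^s + λ₁^s) / 2` is `< 1` for small `s > 0`. Then `∑ₙ (∏_{k<n} λ(f^k x))^s` has finite
integral, hence is finite for almost every `x`, and its terms tend to `0`.
-/

open Set
open scoped ENNReal Topology

def birkhoffProd {α M : Type*} [CommMonoid M] (f : α → α) (g : α → M) (n : ℕ) (x : α) : M :=
  ∏ k ∈ Finset.range n, g (f^[k] x)

section birkhoffProd

variable {α M : Type*} [CommMonoid M] (f : α → α) (g : α → M) (n : ℕ) (x : α)

lemma birkhoffProd_zero : birkhoffProd f g 0 x = 1 := Finset.prod_range_zero _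

lemma birkhoffProd_succ : birkhoffProd f g (n + 1) x = birkhoffProd f g n x * g (f^[n] x) :=
  Finset.prod_range_succ _ _

lemma birkhoffProd_succ' : birkhoffProd f g (n + 1) x = g x * birkhoffProd f g n (f x) :=
  (Finset.prod_range_succ' _ _).trans (mul_comm _ _)

end birkhoffProd

lemma tendsto_zero_of_le_birkhoffProd {X : Type*} {T : X → X} {w : X → ℝ} {G : X → ℝ → ℝ}
    {η : ℝ} (hη : 0 < η) (hG : ∀ x, ∀ y ∈ Ioo 0 η, 0 < G x y ∧ G x y ≤ w x * y) {x : X}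
    (hw : Tendsto (fun n => birkhoffProd T w n x) atTop (𝓝 0)) :
    ∃ δ > 0, ∀ y₀ ∈ Ioo (0 : ℝ) δ, ∀ Y : ℕ → ℝ, Y 0 = y₀ →
      (∀ n : ℕ, Y (n + 1) = G (T^[n] x) (Y n)) → Tendsto Y atTop (𝓝 0) := by
  obtain ⟨C, hC⟩ := hw.bddAbove_range
  have hC1 : 1 ≤ C := (birkhoffProd_zero T w x).symm.le.trans (hC ⟨0, rfl⟩)
  refine ⟨η / C, by positivity, ?_⟩
  rintro _ ⟨hy₀, hy₀δ⟩ Y rfl hY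
  have key : ∀ n, 0 < Y n ∧ Y n ≤ Y 0 * birkhoffProd T w n x := by
    intro n
    induction n with
    | zero => simp [birkhoffProd_zero, hy₀]
    | succ n ih =>
      have hYη : Y n < η := calc
        Y n ≤ Y 0 * birkhoffProd T w n x := ih.2
        _ ≤ Y 0 * C := mul_le_mul_of_nonneg_left (hC ⟨n, rfl⟩) hy₀.le
        _ < η / C * C := mul_lt_mul_of_pos_right hy₀δ (by positivity)
        _ = η := div_mul_cancel₀ η (by positivity)
      obtain ⟨hpos, hle⟩ := hG _ (Y n) ⟨ih.1, hYη⟩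
      have hw_pos : 0 < w (T^[n] x) := pos_of_mul_pos_left (hpos.trans_le hle) ih.1.le
      rw [hY n, birkhoffProd_succ]
      refine ⟨hpos, ?_⟩
      calc G (T^[n] x) (Y n) ≤ w (T^[n] x) * Y n := hle
        _ ≤ w (T^[n] x) * (Y 0 * birkhoffProd T w n x) :=
          mul_le_mul_of_nonneg_left ih.2 hw_pos.le
        _ = Y 0 * (birkhoffProd T w n x * w (T^[n] x)) := by ring
  exact squeeze_zero (fun n => (key n).1.le) (fun n => (key n).2)
    (by simpa using hw.const_mul (Y 0))

noncomputable def halfSplit {α : Type*} (p q : α) (x : ℝ) : α := if x < 1 / 2 then p else q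

lemma exists_fiberMap_le_halfSplit_mul {a b ε : ℝ} (ha : 0 ≤ a) (hb : b < 1) (hε : 0 < ε) :
    ∃ η > 0, ∀ x, ∀ y ∈ Ioo 0 η,
      0 < fiberMap a b x y ∧ fiberMap a b x y ≤ halfSplit (1 + a + ε) (1 - b + ε) x * y := by
  have hnear : ∀ᶠ y in 𝓝 (0 : ℝ), y < 1 ∧ b * y < ε :=
    (eventually_lt_nhds one_pos).and
      ((continuous_const_mul b).continuousAt.eventually_lt continuousAt_const (by simpa using hε))
  obtain ⟨η, hη, hsmall⟩ := Metric.eventually_nhds_iff.1 hnear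
  refine ⟨η, hη, fun x y hy => ?_⟩
  obtain ⟨hy0, hyη⟩ := hy
  obtain ⟨hy1, hby⟩ := hsmall (y := y) (by rwa [Real.dist_eq, sub_zero, abs_of_pos hy0])
  unfold fiberMap halfSplit
  split_ifs
  · constructor <;> nlinarith [mul_nonneg (mul_nonneg ha hy0.le) (sub_pos.2 hy1).le,
      mul_pos hε hy0, mul_nonneg ha (sq_nonneg y)]
  · constructor <;> nlinarith [mul_pos hy0 (mul_pos (sub_pos.2 hb) (sub_pos.2 hy1)),
      mul_pos hy0 (sub_pos.2 hby)]

lemma measurable_doubling : Measurable doubling := by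
  unfold doubling; fun_prop

lemma map_volume_two_mul_sub (k : ℝ) :
    Measure.map (fun x : ℝ => 2 * x - k) volume = ENNReal.ofReal 2⁻¹ • volume := by
  have h := Real.map_volume_mul_left (two_ne_zero (α := ℝ))
  rw [abs_of_pos (by norm_num)] at h
  rw [show (fun x : ℝ => 2 * x - k) = (· - k) ∘ (2 * ·) from rfl,
    ← Measure.map_map (measurable_sub_const k) (measurable_const_mul 2), h,
    Measure.map_smul, map_sub_right_eq_self]

lemma setLIntegral_comp_two_mul_sub (g : ℝ → ℝ≥0∞) (k : ℝ) :
    ∫⁻ x in Ico (k / 2) ((k + 1) / 2), g (2 * x - k) = 2⁻¹ * ∫⁻ y in Ico 0 1, g y := by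
  have hmp : MeasurePreserving (fun x : ℝ => 2 * x - k) volume (ENNReal.ofReal 2⁻¹ • volume) :=
    ⟨by fun_prop, map_volume_two_mul_sub k⟩
  have hemb : MeasurableEmbedding (fun x : ℝ => 2 * x - k) :=
    ((Homeomorph.mulLeft₀ (2:ℝ) two_ne_zero).trans (Homeomorph.subRight k)).measurableEmbedding
  have hpre : (fun x : ℝ => 2 * x - k) ⁻¹' Ico 0 1 = Ico (k / 2) ((k + 1) / 2) := by
    ext x
    simp only [mem_preimage, mem_Ico]
    constructor <;> rintro ⟨h1, h2⟩ <;> constructor <;> linarith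
  rw [← hpre, hmp.setLIntegral_comp_preimage_emb hemb, Measure.restrict_smul,
    lintegral_smul_measure, ENNReal.ofReal_inv_of_pos two_pos, ENNReal.ofReal_ofNat, smul_eq_mul]

lemma doubling_eq_of_mem_Ico {k : ℤ} {x : ℝ} (hx : x ∈ Ico ((k : ℝ) / 2) ((k + 1) / 2)) :
    doubling x = 2 * x - k := by
  rw [doubling, ← Int.fract_sub_intCast, Int.fract_eq_self]
  constructor <;> linarith [hx.1, hx.2]

lemma setLIntegral_comp_doubling (g : ℝ → ℝ≥0∞) (k : ℤ) :
    ∫⁻ x in Ico ((k : ℝ) / 2) ((k + 1) / 2), g (doubling x) = 2⁻¹ * ∫⁻ y in Ico 0 1, g y := by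
  rw [← setLIntegral_comp_two_mul_sub g k]
  exact setLIntegral_congr_fun measurableSet_Ico fun x hx => by rw [doubling_eq_of_mem_Ico hx]

lemma measurable_birkhoffProd_halfSplit (p q : ℝ≥0∞) (n : ℕ) :
    Measurable (birkhoffProd doubling (halfSplit p q) n) :=
  Finset.measurable_prod _ fun k _ =>
    (Measurable.ite measurableSet_Iio measurable_const measurable_const).comp
      (measurable_doubling.iterate k)

lemma lintegral_halfSplit_mul_comp_doubling (p q : ℝ≥0∞) {g : ℝ → ℝ≥0∞} (hg : Measurable g) :
    ∫⁻ x in Ico 0 1, halfSplit p q x * g (doubling x) = (p + q) / 2 * ∫⁻ x in Ico 0 1, g x := by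
  have half : ∀ (k : ℤ) (c : ℝ≥0∞), (∀ x ∈ Ico ((k : ℝ) / 2) ((k + 1) / 2), halfSplit p q x = c) →
      ∫⁻ x in Ico ((k : ℝ) / 2) ((k + 1) / 2), halfSplit p q x * g (doubling x)
        = c * (2⁻¹ * ∫⁻ x in Ico 0 1, g x) := by
    intro k c hc
    rw [setLIntegral_congr_fun measurableSet_Ico fun x hx => by rw [hc x hx],
      lintegral_const_mul _ (f := fun x => g (doubling x)) (hg.comp measurable_doubling),
      setLIntegral_comp_doubling g k]
  have hleft := half 0 p fun x hx => if_pos (by simpa using hx.2)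
  have hright := half 1 q fun x hx => if_neg (by norm_num at hx; linarith [hx.1])
  norm_num at hleft hright
  conv_lhs => rw [← Ico_union_Ico_eq_Ico (by norm_num : (0 : ℝ) ≤ 1 / 2) (by norm_num),
    lintegral_union measurableSet_Ico Ico_disjoint_Ico_same, hleft, hright]
  rw [div_eq_mul_inv]
  ring

lemma lintegral_birkhoffProd_halfSplit (p q : ℝ≥0∞) (n : ℕ) :
    ∫⁻ x in Ico 0 1, birkhoffProd doubling (halfSplit p q) n x = ((p + q) / 2) ^ n := by
  induction n with
  | zero => simp [birkhoffProd_zero]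
  | succ n ih =>
    simp_rw [birkhoffProd_succ']
    rw [lintegral_halfSplit_mul_comp_doubling p q (measurable_birkhoffProd_halfSplit p q n), ih,
      pow_succ']

lemma ae_tendsto_birkhoffProd_halfSplit_of_add_lt_two {p q : ℝ≥0∞} (hpq : p + q < 2) :
    ∀ᵐ x ∂volume.restrict (Ico (0 : ℝ) 1),
      Tendsto (fun n => birkhoffProd doubling (halfSplit p q) n x) atTop (𝓝 0) := by
  have hr : (p + q) / 2 < 1 :=
    (ENNReal.div_lt_iff (by norm_num) (by norm_num)).2 (by simpa using hpq)
  have hsum : ∫⁻ x in Ico 0 1, ∑' n, birkhoffProd doubling (halfSplit p q) n x ≠ ⊤ := by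
    rw [lintegral_tsum fun n => (measurable_birkhoffProd_halfSplit p q n).aemeasurable]
    simp_rw [lintegral_birkhoffProd_halfSplit, ENNReal.tsum_geometric]
    exact ENNReal.inv_ne_top.2 (tsub_pos_of_lt hr).ne'
  filter_upwards [ae_lt_top (Measurable.tsum (measurable_birkhoffProd_halfSplit p q)) hsum]
    with x hx
  exact ENNReal.tendsto_atTop_zero_of_tsum_ne_top hx.ne

lemma exists_pos_rpow_add_rpow_lt_two {p q : ℝ} (hp : 0 < p) (hq : 0 < q)
    (hpq : Real.log p + Real.log q < 0) : ∃ s : ℝ, 0 < s ∧ p ^ s + q ^ s < 2 := by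
  have hderiv : HasDerivAt (fun s : ℝ => p ^ s + q ^ s) (Real.log p + Real.log q) 0 := by
    have := (Real.hasStrictDerivAt_const_rpow hp 0).hasDerivAt.fun_add
      (Real.hasStrictDerivAt_const_rpow hq 0).hasDerivAt
    simpa using this
  obtain ⟨s, hslope, hs⟩ :=
    ((hderiv.tendsto_slope_zero_right.eventually (gt_mem_nhds hpq)).and self_mem_nhdsWithin).exists
  refine ⟨s, hs, ?_⟩
  simp only [zero_add, Real.rpow_zero, smul_eq_mul] at hslope
  linarith [neg_of_mul_neg_right hslope (inv_pos.2 hs).le]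

lemma ofReal_birkhoffProd_halfSplit_rpow (f : ℝ → ℝ) {p q : ℝ} (hp : 0 ≤ p) (hq : 0 ≤ q)
    (s : ℝ) (n : ℕ) (x : ℝ) :
    ENNReal.ofReal (birkhoffProd f (halfSplit p q) n x ^ s)
      = birkhoffProd f (halfSplit (ENNReal.ofReal (p ^ s)) (ENNReal.ofReal (q ^ s))) n x := by
  have hw : ∀ y, 0 ≤ halfSplit p q y := fun y => by unfold halfSplit; split_ifs <;> assumption
  rw [birkhoffProd, ← Real.finsetProd_rpow _ _ fun k _ => hw _,
    ENNReal.ofReal_prod_of_nonneg fun k _ => Real.rpow_nonneg (hw _) s]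
  refine Finset.prod_congr rfl fun k _ => ?_
  unfold halfSplit; split_ifs <;> rfl

lemma ae_tendsto_birkhoffProd_halfSplit {p q : ℝ} (hp : 0 < p) (hq : 0 < q)
    (hpq : Real.log p + Real.log q < 0) :
    ∀ᵐ x ∂volume.restrict (Icc (0 : ℝ) 1),
      Tendsto (fun n => birkhoffProd doubling (halfSplit p q) n x) atTop (𝓝 0) := by
  obtain ⟨s, hs, hlt⟩ := exists_pos_rpow_add_rpow_lt_two hp hq hpq
  have hlt' : ENNReal.ofReal (p ^ s) + ENNReal.ofReal (q ^ s) < 2 := by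
    rw [← ENNReal.ofReal_add (by positivity) (by positivity), ← ENNReal.ofReal_ofNat 2]
    exact (ENNReal.ofReal_lt_ofReal_iff (by norm_num)).2 hlt
  rw [Measure.restrict_congr_set Ico_ae_eq_Icc.symm]
  filter_upwards [ae_tendsto_birkhoffProd_halfSplit_of_add_lt_two hlt'] with x hx
  set P := fun n => birkhoffProd doubling (halfSplit p q) n x
  have hP : ∀ n, 0 ≤ P n := fun n =>
    Finset.prod_nonneg fun k _ => by unfold halfSplit; split_ifs <;> positivity
  have hPs : Tendsto (fun n => P n ^ s) atTop (𝓝 0) := by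
    have := (ENNReal.tendsto_toReal ENNReal.zero_ne_top).comp
      (hx.congr fun n => (ofReal_birkhoffProd_halfSplit_rpow doubling hp.le hq.le s n x).symm)
    exact this.congr fun n => ENNReal.toReal_ofReal (Real.rpow_nonneg (hP n) s)
  simpa [Real.rpow_rpow_inv (hP _) hs.ne', Real.zero_rpow (inv_ne_zero hs.ne')] using
    hPs.rpow_const (p := s⁻¹) (Or.inr (by positivity))

theorem stmt_11_general (a b ε : ℝ) (ha : 0 < a) (hb' : b < 1/2) (hε : 0 < ε)
    (hεsmall : (1/2) * Real.log ((1 + a) + ε) + (1/2) * Real.log ((1 - b) + ε) < 0) :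
    ∀ᵐ x ∂(volume.restrict (Set.Icc (0:ℝ) 1)),
      ∃ δ > 0, ∀ y₀ ∈ Set.Ioo (0:ℝ) δ, ∀ Y : ℕ → ℝ, Y 0 = y₀ →
        (∀ n : ℕ, Y (n + 1) = fiberMap a b (doubling^[n] x) (Y n)) →
        Tendsto Y atTop (nhds 0) := by
  obtain ⟨η, hη, hfiber⟩ := exists_fiberMap_le_halfSplit_mul ha.le (by linarith : b < 1) hε
  have hlyap : Real.log (1 + a + ε) + Real.log (1 - b + ε) < 0 := by linarith
  filter_upwards [ae_tendsto_birkhoffProd_halfSplit (by positivity) (by linarith) hlyap] with x hx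
  exact tendsto_zero_of_le_birkhoffProd hη hfiber hx

theorem stmt_11 (a b ε : ℝ) (ha : 0 < a) (ha' : a < 1/2) (hb : 0 < b) (hb' : b < 1/2)
    (hab : b > a / (1 + a)) (hε : 0 < ε)
    (hεsmall : (1/2) * Real.log ((1 + a) + ε) + (1/2) * Real.log ((1 - b) + ε) < 0) :
    ∀ᵐ x ∂(volume.restrict (Set.Icc (0:ℝ) 1)),
      ∃ δ > 0, ∀ y₀ ∈ Set.Ioo (0:ℝ) δ, ∀ Y : ℕ → ℝ, Y 0 = y₀ →
        (∀ n : ℕ, Y (n + 1) = fiberMap a b (doubling^[n] x) (Y n)) →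
        Tendsto Y atTop (nhds 0) :=
  stmt_11_general a b ε ha hb' hε hεsmall
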